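/- arXiv:2307.11352 — 3 statements merged into one kernel-verified Lean document; each statement's English description precedes it below -/
import Mathlib

section
/- (Telescoping value-difference lemma.) Let M* and M̂ be two MDPs sharing state space S, action space A, reward r bounded by R_max, initial distribution d₀, and discount γ ∈ [0,1), but with transition kernels P* and P̂ respectively. For any policy π, the difference of expected returns satisfies V^π_{M̂} − V^π_{M*} = (γ/(1−γ)) · E_{(s,a)∼d^π_{P̂}}[ E_{s'∼P̂(·|s,a)}[V^π_{P*,r}(s')] − E_{s'∼P*(·|s,a)}[V^π_{P*,r}(s')] ], where d^π_{P̂} is the normalized discounted state-action visitation distribution of π under P̂. -/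
open Finset

section MDPDefs

variable {S A : Type*} [Fintype S] [Fintype A] [DecidableEq S]

/-- A function is a probability mass function on a finite type. -/
def IsPMF {X : Type*} [Fintype X] (p : X → ℝ) : Prop :=
  (∀ x, 0 ≤ p x) ∧ ∑ x, p x = 1

/-- Total variation distance between two distributions on a finite type,
given by the half `ℓ¹` formula. -/
noncomputable def tv {X : Type*} [Fintype X] (p q : X → ℝ) : ℝ :=
  (1 / 2) * ∑ x, |p x - q x|

/-- One-step pushforward of a state-action distribution under policy `π` and
transition kernel `P`. -/
noncomputable def stepSA (π : S → A → ℝ) (P : S → A → S → ℝ)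
    (μ : S × A → ℝ) : S × A → ℝ :=
  fun sa => ∑ s : S, ∑ a : A, μ (s, a) * P s a sa.1 * π sa.1 sa.2

/-- Distribution over state-action pairs at time `t`, starting from initial
state distribution `μ₀`, following policy `π` in kernel `P`. -/
noncomputable def occ (π : S → A → ℝ) (P : S → A → S → ℝ) (μ₀ : S → ℝ) :
    ℕ → S × A → ℝ
  | 0 => fun sa => μ₀ sa.1 * π sa.1 sa.2
  | (t + 1) => stepSA π P (occ π P μ₀ t)

/-- Value function `V^π_{P,r}(s) = E_{π,P}[∑_t γ^t r(s_t,a_t) | s₀ = s]`. -/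
noncomputable def valueFn (π : S → A → ℝ) (P : S → A → S → ℝ) (r : S → A → ℝ)
    (γ : ℝ) (s : S) : ℝ :=
  ∑' t : ℕ, γ ^ t *
    ∑ sa : S × A, occ π P (fun s' => if s' = s then (1 : ℝ) else 0) t sa * r sa.1 sa.2

/-- Expected return `V^π_M = E_{s ∼ d₀}[V^π_{P,r}(s)]`. -/
noncomputable def expReturn (π : S → A → ℝ) (P : S → A → S → ℝ) (r : S → A → ℝ)
    (γ : ℝ) (d₀ : S → ℝ) : ℝ :=
  ∑ s : S, d₀ s * valueFn π P r γ s

/-- Normalized discounted state-action visitation distribution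
`d^π_P(s,a) = (1-γ) ∑_t γ^t Pr[s_t = s, a_t = a]`. -/
noncomputable def visit (π : S → A → ℝ) (P : S → A → S → ℝ) (d₀ : S → ℝ)
    (γ : ℝ) : S × A → ℝ :=
  fun sa => (1 - γ) * ∑' t : ℕ, γ ^ t * occ π P d₀ t sa

end MDPDefs

set_option linter.unusedSectionVars false
section SimAux

variable {S A : Type*} [Fintype S] [Fintype A] [DecidableEq S]

/-- Pushforward of a state distribution through one step of `π` then `P`. -/
noncomputable def pushS (π : S → A → ℝ) (P : S → A → S → ℝ) (μ : S → ℝ) : S → ℝ :=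
  fun s' => ∑ s, ∑ a, μ s * π s a * P s a s'

lemma occ_eq (π : S → A → ℝ) (P : S → A → S → ℝ) (μ : S → ℝ) (t : ℕ) :
    occ π P μ t = fun sa => (pushS π P)^[t] μ sa.1 * π sa.1 sa.2 := by
  induction t with
  | zero => rfl
  | succ t ih =>
    funext sa
    rw [occ, ih, Function.iterate_succ_apply']
    simp only [stepSA, pushS, Finset.sum_mul]

lemma pushS_iter_linear (π : S → A → ℝ) (P : S → A → S → ℝ) (μ : S → ℝ) :
    ∀ (t : ℕ) (s'' : S), (pushS π P)^[t] μ s'' =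
      ∑ s, μ s * (pushS π P)^[t] (fun x => if x = s then (1 : ℝ) else 0) s'' := by
  intro t
  induction t with
  | zero =>
    intro s''
    simp
  | succ t ih =>
    intro s''
    simp only [Function.iterate_succ_apply', pushS, ih, Finset.sum_mul, Finset.mul_sum]
    calc ∑ s, ∑ a, ∑ x, μ x * (pushS π P)^[t] (fun y => if y = x then (1:ℝ) else 0) s * π s a * P s a s''
        = ∑ s, ∑ x, ∑ a, μ x * (pushS π P)^[t] (fun y => if y = x then (1:ℝ) else 0) s * π s a * P s a s'' :=
          Finset.sum_congr rfl fun _ _ => Finset.sum_comm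
      _ = ∑ x, ∑ s, ∑ a, μ x * (pushS π P)^[t] (fun y => if y = x then (1:ℝ) else 0) s * π s a * P s a s'' :=
          Finset.sum_comm
      _ = ∑ x, ∑ s, ∑ a, μ x * ((pushS π P)^[t] (fun y => if y = x then (1:ℝ) else 0) s * π s a * P s a s'') := by
          simp [mul_assoc]

lemma IsPMF.le_one {X : Type*} [Fintype X] {p : X → ℝ} (hp : IsPMF p) (x : X) : p x ≤ 1 := by
  have h := Finset.single_le_sum (fun i _ => hp.1 i) (Finset.mem_univ x)
  rwa [hp.2] at h

lemma isPMF_pushS {π : S → A → ℝ} {P : S → A → S → ℝ} {μ : S → ℝ}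
    (hπ : ∀ s, IsPMF (π s)) (hP : ∀ s a, IsPMF (P s a)) (hμ : IsPMF μ) :
    IsPMF (pushS π P μ) := by
  constructor
  · intro s'
    exact Finset.sum_nonneg fun s _ => Finset.sum_nonneg fun a _ =>
      mul_nonneg (mul_nonneg (hμ.1 s) ((hπ s).1 a)) ((hP s a).1 s')
  · have hsw : ∑ s', pushS π P μ s' = ∑ s, ∑ a, ∑ s', μ s * π s a * P s a s' := by
      simp only [pushS]
      rw [Finset.sum_comm]
      exact Finset.sum_congr rfl fun s _ => Finset.sum_comm
    rw [hsw]
    have : ∀ s, ∑ a, ∑ s', μ s * π s a * P s a s' = μ s := by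
      intro s
      have : ∀ a : A, ∑ s', μ s * π s a * P s a s' = μ s * π s a := by
        intro a
        rw [← Finset.mul_sum, (hP s a).2, mul_one]
      simp only [this, ← Finset.mul_sum, (hπ s).2, mul_one]
    simp only [this, hμ.2]

lemma isPMF_pushS_iter {π : S → A → ℝ} {P : S → A → S → ℝ} {μ : S → ℝ}
    (hπ : ∀ s, IsPMF (π s)) (hP : ∀ s a, IsPMF (P s a)) (hμ : IsPMF μ) (t : ℕ) :
    IsPMF ((pushS π P)^[t] μ) := by
  induction t with
  | zero => exact hμ
  | succ t ih => rw [Function.iterate_succ_apply']; exact isPMF_pushS hπ hP ih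

lemma rbar_bound {π : S → A → ℝ} {μ : S → ℝ} (r : S → A → ℝ)
    (hπ : ∀ s, IsPMF (π s)) (hμ : IsPMF μ) :
    |∑ x, ∑ a, μ x * π x a * r x a| ≤ ∑ x, ∑ a, |r x a| := by
  refine (Finset.abs_sum_le_sum_abs _ _).trans (Finset.sum_le_sum fun x _ => ?_)
  refine (Finset.abs_sum_le_sum_abs _ _).trans (Finset.sum_le_sum fun a _ => ?_)
  rw [abs_mul, abs_mul, abs_of_nonneg (hμ.1 x), abs_of_nonneg ((hπ x).1 a)]
  calc μ x * π x a * |r x a| ≤ 1 * |r x a| :=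
        mul_le_mul_of_nonneg_right
          (mul_le_one₀ (hμ.le_one x) ((hπ x).1 a) ((hπ x).le_one a)) (abs_nonneg _)
    _ = |r x a| := one_mul _

lemma summable_geo_mul {γ : ℝ} (hγ0 : 0 ≤ γ) (hγ1 : γ < 1) (c : ℕ → ℝ) (M : ℝ)
    (hc : ∀ t, |c t| ≤ M) : Summable fun t => γ ^ t * c t := by
  refine Summable.of_norm_bounded
    ((summable_geometric_of_lt_one hγ0 hγ1).mul_right M) fun t => ?_
  rw [Real.norm_eq_abs, abs_mul, abs_pow, abs_of_nonneg hγ0]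
  exact mul_le_mul_of_nonneg_left (hc t) (pow_nonneg hγ0 t)
lemma isPMF_delta (s : S) : IsPMF (fun x => if x = s then (1 : ℝ) else 0) := by
  constructor
  · intro x; simp only []; positivity
  · simp

lemma sum_mul_rbar_delta (π : S → A → ℝ) (P : S → A → S → ℝ) (r : S → A → ℝ)
    (μ : S → ℝ) (t : ℕ) :
    ∑ s, μ s * ∑ x, ∑ a,
        (pushS π P)^[t] (fun y => if y = s then (1 : ℝ) else 0) x * π x a * r x a
      = ∑ x, ∑ a, (pushS π P)^[t] μ x * π x a * r x a := by
  simp only [pushS_iter_linear π P μ, Finset.sum_mul, Finset.mul_sum]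
  calc ∑ s, ∑ x, ∑ a, μ s *
          ((pushS π P)^[t] (fun y => if y = s then (1:ℝ) else 0) x * π x a * r x a)
      = ∑ x, ∑ s, ∑ a, μ s *
          ((pushS π P)^[t] (fun y => if y = s then (1:ℝ) else 0) x * π x a * r x a) :=
        Finset.sum_comm
    _ = ∑ x, ∑ a, ∑ s, μ s *
          ((pushS π P)^[t] (fun y => if y = s then (1:ℝ) else 0) x * π x a * r x a) :=
        Finset.sum_congr rfl fun _ _ => Finset.sum_comm
    _ = ∑ x, ∑ a, ∑ s, μ s *
          (pushS π P)^[t] (fun y => if y = s then (1:ℝ) else 0) x * π x a * r x a :=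
        Finset.sum_congr rfl fun _ _ => Finset.sum_congr rfl fun _ _ =>
          Finset.sum_congr rfl fun _ _ => by ring

lemma valueFn_eq (π : S → A → ℝ) (P : S → A → S → ℝ) (r : S → A → ℝ) (γ : ℝ) (s : S) :
    valueFn π P r γ s = ∑' t : ℕ, γ ^ t * ∑ x, ∑ a,
      (pushS π P)^[t] (fun y => if y = s then (1 : ℝ) else 0) x * π x a * r x a := by
  simp only [valueFn, occ_eq, Fintype.sum_prod_type]

lemma expVal (π : S → A → ℝ) (P : S → A → S → ℝ) (r : S → A → ℝ) {γ : ℝ}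
    (hπ : ∀ s, IsPMF (π s)) (hP : ∀ s a, IsPMF (P s a))
    (hγ0 : 0 ≤ γ) (hγ1 : γ < 1) (μ : S → ℝ) :
    ∑ s, μ s * valueFn π P r γ s
      = ∑' t : ℕ, γ ^ t * ∑ x, ∑ a, (pushS π P)^[t] μ x * π x a * r x a := by
  set M : ℝ := ∑ x, ∑ a, |r x a| with hM
  have hsum : ∀ s : S, Summable (fun t : ℕ => γ ^ t * ∑ x, ∑ a,
      (pushS π P)^[t] (fun y => if y = s then (1 : ℝ) else 0) x * π x a * r x a) := by
    intro s
    exact summable_geo_mul hγ0 hγ1 _ M fun t =>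
      rbar_bound r hπ (isPMF_pushS_iter hπ hP (isPMF_delta s) t)
  calc ∑ s, μ s * valueFn π P r γ s
      = ∑ s, ∑' t : ℕ, μ s * (γ ^ t * ∑ x, ∑ a,
          (pushS π P)^[t] (fun y => if y = s then (1 : ℝ) else 0) x * π x a * r x a) := by
        refine Finset.sum_congr rfl fun s _ => ?_
        rw [valueFn_eq, tsum_mul_left]
    _ = ∑' t : ℕ, ∑ s, μ s * (γ ^ t * ∑ x, ∑ a,
          (pushS π P)^[t] (fun y => if y = s then (1 : ℝ) else 0) x * π x a * r x a) :=
        (Summable.tsum_finsetSum fun s _ => ((hsum s).mul_left _)).symm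
    _ = ∑' t : ℕ, γ ^ t * ∑ x, ∑ a, (pushS π P)^[t] μ x * π x a * r x a := by
        refine tsum_congr fun t => ?_
        rw [← sum_mul_rbar_delta π P r μ t, Finset.mul_sum]
        exact Finset.sum_congr rfl fun s _ => by ring
lemma sum_pull (π : S → A → ℝ) (P : S → A → S → ℝ) (ν V : S → ℝ) :
    ∑ s, ∑ a, ν s * π s a * ∑ s', P s a s' * V s'
      = ∑ s', pushS π P ν s' * V s' := by
  simp only [Finset.mul_sum, pushS, Finset.sum_mul]
  calc ∑ s, ∑ a, ∑ s', ν s * π s a * (P s a s' * V s')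
      = ∑ s, ∑ s', ∑ a, ν s * π s a * (P s a s' * V s') :=
        Finset.sum_congr rfl fun _ _ => Finset.sum_comm
    _ = ∑ s', ∑ s, ∑ a, ν s * π s a * (P s a s' * V s') := Finset.sum_comm
    _ = ∑ s', ∑ s, ∑ a, ν s * π s a * P s a s' * V s' :=
        Finset.sum_congr rfl fun _ _ => Finset.sum_congr rfl fun _ _ =>
          Finset.sum_congr rfl fun _ _ => by ring

end SimAux

/-- telescoping value-difference lemma. -/
theorem stmt4 {S A : Type*} [Fintype S] [Fintype A] [DecidableEq S]
    (π : S → A → ℝ) (Pstar Phat : S → A → S → ℝ) (r : S → A → ℝ)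
    (d₀ : S → ℝ) (γ Rmax : ℝ)
    (hπ : ∀ s, IsPMF (π s)) (hPstar : ∀ s a, IsPMF (Pstar s a))
    (hPhat : ∀ s a, IsPMF (Phat s a)) (hd₀ : IsPMF d₀)
    (hr : ∀ s a, |r s a| ≤ Rmax)
    (hγ0 : 0 ≤ γ) (hγ1 : γ < 1) :
    expReturn π Phat r γ d₀ - expReturn π Pstar r γ d₀ =
      (γ / (1 - γ)) *
        ∑ sa : S × A, visit π Phat d₀ γ sa *
          ((∑ s' : S, Phat sa.1 sa.2 s' * valueFn π Pstar r γ s') -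
            ∑ s' : S, Pstar sa.1 sa.2 s' * valueFn π Pstar r γ s') := by
  classical
  set M : ℝ := ∑ x, ∑ a, |r x a| with hM
  set m : ℕ → S → ℝ := fun t => (pushS π Phat)^[t] d₀ with hm
  set c : ℕ → ℕ → ℝ :=
    fun t u => ∑ x, ∑ a, (pushS π Pstar)^[u] (m t) x * π x a * r x a with hc
  have hmPMF : ∀ t, IsPMF (m t) := fun t => isPMF_pushS_iter hπ hPhat hd₀ t
  have hqPMF : ∀ t u, IsPMF ((pushS π Pstar)^[u] (m t)) :=
    fun t u => isPMF_pushS_iter hπ hPstar (hmPMF t) u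
  have hcB : ∀ t u, |c t u| ≤ M := fun t u => rbar_bound r hπ (hqPMF t u)
  have hγpos : (0 : ℝ) < 1 - γ := by linarith
  have hγne : (1 : ℝ) - γ ≠ 0 := ne_of_gt hγpos
  have hgeo := summable_geometric_of_lt_one hγ0 hγ1
  set B : ℕ → ℝ := fun t => ∑' u : ℕ, γ ^ u * c t u with hB
  have hsumB : ∀ t, Summable fun u : ℕ => γ ^ u * c t u :=
    fun t => summable_geo_mul hγ0 hγ1 _ M (hcB t)
  have hBbound : ∀ t, |B t| ≤ M * (1 - γ)⁻¹ := by
    intro t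
    calc |B t| ≤ ∑' u : ℕ, |γ ^ u * c t u| := by
          have habs : Summable fun u : ℕ => ‖γ ^ u * c t u‖ := by
            simpa only [Real.norm_eq_abs] using (hsumB t).abs
          simpa only [Real.norm_eq_abs] using norm_tsum_le_tsum_norm habs
      _ ≤ ∑' u : ℕ, γ ^ u * M := by
          refine Summable.tsum_le_tsum (fun u => ?_) ((hsumB t).abs) (hgeo.mul_right M)
          rw [abs_mul, abs_pow, abs_of_nonneg hγ0]
          exact mul_le_mul_of_nonneg_left (hcB t u) (pow_nonneg hγ0 u)
      _ = M * (1 - γ)⁻¹ := by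
          rw [tsum_mul_right, tsum_geometric_of_lt_one hγ0 hγ1, mul_comm]
  set A' : ℕ → ℝ := fun t => γ ^ t * B t with hA'
  have hsumA : Summable A' := summable_geo_mul hγ0 hγ1 B (M * (1 - γ)⁻¹) hBbound
  have hsumg : Summable fun t : ℕ => γ ^ t * c t 0 :=
    summable_geo_mul hγ0 hγ1 _ M fun t => hcB t 0
  -- expected returns
  have hhat : expReturn π Phat r γ d₀ = ∑' t : ℕ, γ ^ t * c t 0 := by
    rw [expReturn, expVal π Phat r hπ hPhat hγ0 hγ1 d₀]
    exact tsum_congr fun t => by simp [hc, hm]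
  have hstar : expReturn π Pstar r γ d₀ = B 0 := by
    rw [expReturn, expVal π Pstar r hπ hPstar hγ0 hγ1 d₀]
    simp only [hB, hc, hm, Function.iterate_zero, id_eq]
  -- the gap function
  set V : S → ℝ := valueFn π Pstar r γ with hV
  set Δ : S → A → ℝ :=
    fun s a => (∑ s' : S, Phat s a s' * V s') - ∑ s' : S, Pstar s a s' * V s' with hΔ
  set e : ℕ → ℝ := fun t => ∑ s, ∑ a, m t s * π s a * Δ s a with he'
  set D : ℕ → ℝ := fun t => ∑' u : ℕ, γ ^ u * c t (u + 1) with hD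
  -- visitation rewrite
  have hvisit : ∀ sa : S × A,
      visit π Phat d₀ γ sa = (1 - γ) * ∑' t : ℕ, γ ^ t * (m t sa.1 * π sa.1 sa.2) := by
    intro sa
    simp only [visit, occ_eq, hm]
  have hΔsum : ∀ s a, Summable fun t : ℕ => γ ^ t * (m t s * π s a * Δ s a) := by
    intro s a
    refine summable_geo_mul hγ0 hγ1 _ |Δ s a| fun t => ?_
    rw [abs_mul]
    calc |m t s * π s a| * |Δ s a| ≤ 1 * |Δ s a| := by
          refine mul_le_mul_of_nonneg_right ?_ (abs_nonneg _)
          rw [abs_mul, abs_of_nonneg ((hmPMF t).1 s), abs_of_nonneg ((hπ s).1 a)]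
          exact mul_le_one₀ ((hmPMF t).le_one s) ((hπ s).1 a) ((hπ s).le_one a)
      _ = |Δ s a| := one_mul _
  -- RHS sum rewrite
  have hRHS : ∑ sa : S × A, visit π Phat d₀ γ sa * Δ sa.1 sa.2
      = (1 - γ) * ∑' t : ℕ, γ ^ t * e t := by
    calc ∑ sa : S × A, visit π Phat d₀ γ sa * Δ sa.1 sa.2
        = ∑ s, ∑ a, (1 - γ) * ∑' t : ℕ, γ ^ t * (m t s * π s a * Δ s a) := by
          rw [Fintype.sum_prod_type]
          refine Finset.sum_congr rfl fun s _ => Finset.sum_congr rfl fun a _ => ?_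
          rw [hvisit (s, a), mul_assoc, ← tsum_mul_right]
          congr 1
          exact tsum_congr fun t => by ring
      _ = (1 - γ) * ∑ s, ∑ a, ∑' t : ℕ, γ ^ t * (m t s * π s a * Δ s a) := by
          rw [Finset.mul_sum]
          exact Finset.sum_congr rfl fun s _ => (Finset.mul_sum _ _ _).symm
      _ = (1 - γ) * ∑' t : ℕ, ∑ s, ∑ a, γ ^ t * (m t s * π s a * Δ s a) := by
          congr 1
          rw [Summable.tsum_finsetSum fun s _ => summable_sum fun a _ => hΔsum s a]
          exact Finset.sum_congr rfl fun s _ => (Summable.tsum_finsetSum fun a _ => hΔsum s a).symm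
      _ = (1 - γ) * ∑' t : ℕ, γ ^ t * e t := by
          congr 1
          refine tsum_congr fun t => ?_
          rw [Finset.mul_sum]
          exact Finset.sum_congr rfl fun s _ => (Finset.mul_sum _ _ _).symm
  -- the key per-step identity
  have hkey : ∀ t, e t = B (t + 1) - D t := by
    intro t
    have h1 : ∑ s, ∑ a, m t s * π s a * ∑ s' : S, Phat s a s' * V s' = B (t + 1) := by
      rw [sum_pull π Phat (m t) V]
      have hm1 : pushS π Phat (m t) = m (t + 1) := by
        rw [hm]; exact (Function.iterate_succ_apply' _ _ _).symm
      rw [hm1, hV, expVal π Pstar r hπ hPstar hγ0 hγ1 (m (t + 1))]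
    have h2 : ∑ s, ∑ a, m t s * π s a * ∑ s' : S, Pstar s a s' * V s' = D t := by
      rw [sum_pull π Pstar (m t) V, hV, expVal π Pstar r hπ hPstar hγ0 hγ1 (pushS π Pstar (m t))]
      rfl
    rw [he']
    simp only [hΔ, mul_sub, Finset.sum_sub_distrib]
    rw [h1, h2]
  have hγD : ∀ t, γ * D t = B t - c t 0 := by
    intro t
    have h0 := Summable.tsum_eq_zero_add (hsumB t)
    have h1 : ∑' u : ℕ, γ ^ (u + 1) * c t (u + 1) = γ * D t := by
      rw [hD, ← tsum_mul_left]
      exact tsum_congr fun u => by ring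
    rw [pow_zero, one_mul] at h0
    rw [h1] at h0
    have hBt : B t = ∑' u : ℕ, γ ^ u * c t u := rfl
    rw [hBt]
    linarith
  have hkey2 : ∀ t, γ * (γ ^ t * e t) = A' (t + 1) - (A' t - γ ^ t * c t 0) := by
    intro t
    rw [hkey t]
    simp only [hA']
    have h := hγD t
    linear_combination (-(γ ^ t)) * h
  -- assemble
  rw [hhat, hstar, hRHS]
  have hfield : γ / (1 - γ) * ((1 - γ) * ∑' t : ℕ, γ ^ t * e t)
      = γ * ∑' t : ℕ, γ ^ t * e t := by
    field_simp
  rw [hfield, ← tsum_mul_left]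
  symm
  have hsumA1 : Summable fun t : ℕ => A' (t + 1) := (summable_nat_add_iff 1).2 hsumA
  calc ∑' t : ℕ, γ * (γ ^ t * e t)
      = ∑' t : ℕ, (A' (t + 1) - (A' t - γ ^ t * c t 0)) := tsum_congr fun t => hkey2 t
    _ = (∑' t : ℕ, A' (t + 1)) - ((∑' t : ℕ, A' t) - ∑' t : ℕ, γ ^ t * c t 0) := by
        rw [Summable.tsum_sub hsumA1 (hsumA.sub hsumg), Summable.tsum_sub hsumA hsumg]
    _ = ((∑' t : ℕ, A' t) - A' 0) - ((∑' t : ℕ, A' t) - ∑' t : ℕ, γ ^ t * c t 0) := by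
        have := Summable.tsum_eq_zero_add hsumA
        rw [show (∑' t : ℕ, A' (t + 1)) = (∑' t : ℕ, A' t) - A' 0 by linarith]
    _ = (∑' t : ℕ, γ ^ t * c t 0) - B 0 := by
        have hA0 : A' 0 = B 0 := by simp [hA']
        rw [hA0]; ring
end

section
/- (Value gap of estimated model.) Let M* and M̂ be MDPs differing only in transition kernels P* and P̂, with reward bounded by R_max and discount γ ∈ [0,1). Suppose for every state-action pair (s,a), TV(P̂(·|s,a), P*(·|s,a)) ≤ C(s,a) for some function C : S×A → [0,1]. Then for any policy π, V^π_{M̂} − V^π_{M*} ≤ (2γ·R_max/(1−γ)²) · E_{(s,a)∼d^π_{P̂}}[C(s,a)]. -/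
open Finset

section Aux

variable {S A : Type*} [Fintype S] [Fintype A] [DecidableEq S]
variable {π : S → A → ℝ} {P : S → A → S → ℝ} {d₀ : S → ℝ}

/-- generic sum formula for stepSA -/
lemma stepSA_sum (hπ : ∀ s, ∑ a, π s a = 1) (P : S → A → S → ℝ) (μ : S × A → ℝ) :
    ∑ sa : S × A, stepSA π P μ sa = ∑ sa : S × A, μ sa * ∑ s' : S, P sa.1 sa.2 s' := by
  have key : ∀ sa : S × A, ∑ sa' : S × A, μ sa * P sa.1 sa.2 sa'.1 * π sa'.1 sa'.2
      = μ sa * ∑ s' : S, P sa.1 sa.2 s' := by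
    intro sa
    rw [Fintype.sum_prod_type, Finset.mul_sum]
    refine Finset.sum_congr rfl fun s' _ => ?_
    show ∑ a' : A, μ sa * P sa.1 sa.2 s' * π s' a' = _
    rw [← Finset.mul_sum, hπ s', mul_one]
  calc ∑ sa' : S × A, stepSA π P μ sa'
      = ∑ sa' : S × A, ∑ sa : S × A, μ sa * P sa.1 sa.2 sa'.1 * π sa'.1 sa'.2 := by
        refine Finset.sum_congr rfl fun sa' _ => ?_
        rw [stepSA]
        exact (Fintype.sum_prod_type (fun sa : S × A => μ sa * P sa.1 sa.2 sa'.1 * π sa'.1 sa'.2)).symm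
    _ = ∑ sa : S × A, ∑ sa' : S × A, μ sa * P sa.1 sa.2 sa'.1 * π sa'.1 sa'.2 :=
        Finset.sum_comm
    _ = ∑ sa : S × A, μ sa * ∑ s' : S, P sa.1 sa.2 s' :=
        Finset.sum_congr rfl fun sa _ => key sa

lemma stepSA_abs_le (hπ0 : ∀ s a, 0 ≤ π s a) (P : S → A → S → ℝ) (μ : S × A → ℝ)
    (sa : S × A) :
    |stepSA π P μ sa| ≤ stepSA π (fun s a s' => |P s a s'|) (fun p => |μ p|) sa := by
  unfold stepSA
  refine (Finset.abs_sum_le_sum_abs _ _).trans ?_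
  refine Finset.sum_le_sum fun s _ => ?_
  refine (Finset.abs_sum_le_sum_abs _ _).trans ?_
  refine Finset.sum_le_sum fun a _ => ?_
  rw [abs_mul, abs_mul, abs_of_nonneg (hπ0 _ _)]

lemma occ_pmf (hπ : ∀ s, IsPMF (π s)) (hP : ∀ s a, IsPMF (P s a)) (hd₀ : IsPMF d₀) :
    ∀ t, IsPMF (occ π P d₀ t) := by
  intro t
  induction t with
  | zero =>
    constructor
    · intro sa; exact mul_nonneg (hd₀.1 _) ((hπ _).1 _)
    · rw [show (occ π P d₀ 0) = fun sa : S × A => d₀ sa.1 * π sa.1 sa.2 from rfl]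
      rw [Fintype.sum_prod_type]
      calc ∑ s : S, ∑ a : A, d₀ s * π s a = ∑ s : S, d₀ s * ∑ a : A, π s a := by
            refine Finset.sum_congr rfl fun s _ => (Finset.mul_sum _ _ _).symm
        _ = 1 := by
            simp_rw [fun s => (hπ s).2]
            simpa using hd₀.2
  | succ t ih =>
    constructor
    · intro sa
      refine Finset.sum_nonneg fun s _ => Finset.sum_nonneg fun a _ => ?_
      exact mul_nonneg (mul_nonneg (ih.1 _) ((hP _ _).1 _)) ((hπ _).1 _)
    · rw [show occ π P d₀ (t+1) = stepSA π P (occ π P d₀ t) from rfl]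
      rw [stepSA_sum (fun s => (hπ s).2)]
      calc ∑ sa : S × A, occ π P d₀ t sa * ∑ s' : S, P sa.1 sa.2 s'
          = ∑ sa : S × A, occ π P d₀ t sa := by
            refine Finset.sum_congr rfl fun sa _ => ?_
            rw [(hP sa.1 sa.2).2, mul_one]
        _ = 1 := ih.2

lemma occ_le_one (hπ : ∀ s, IsPMF (π s)) (hP : ∀ s a, IsPMF (P s a)) (hd₀ : IsPMF d₀)
    (t : ℕ) (sa : S × A) : occ π P d₀ t sa ≤ 1 := by
  have h := occ_pmf hπ hP hd₀ t
  calc occ π P d₀ t sa ≤ ∑ sa' : S × A, occ π P d₀ t sa' :=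
        Finset.single_le_sum (fun i _ => h.1 i) (Finset.mem_univ sa)
    _ = 1 := h.2

lemma stepSA_sub_dist (π : S → A → ℝ) (P : S → A → S → ℝ) (ν μ : S × A → ℝ) :
    stepSA π P (fun sa => ν sa - μ sa) =
      fun sa => stepSA π P ν sa - stepSA π P μ sa := by
  funext sa
  simp only [stepSA, sub_mul, Finset.sum_sub_distrib]

lemma stepSA_kernel_sub (π : S → A → ℝ) (Phat Pstar : S → A → S → ℝ) (ν : S × A → ℝ)
    (sa : S × A) :
    stepSA π Phat ν sa - stepSA π Pstar ν sa =
      stepSA π (fun s a s' => Phat s a s' - Pstar s a s') ν sa := by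
  simp only [stepSA, mul_sub, sub_mul, Finset.sum_sub_distrib]

/-- key recursion bound on the ℓ¹ distance of occupancies -/
lemma delta_bound {Phat Pstar : S → A → S → ℝ} {C : S → A → ℝ}
    (hπ : ∀ s, IsPMF (π s)) (hPstar : ∀ s a, IsPMF (Pstar s a))
    (hPhat : ∀ s a, IsPMF (Phat s a)) (hd₀ : IsPMF d₀)
    (hTV : ∀ s a, tv (Phat s a) (Pstar s a) ≤ C s a) :
    ∀ t : ℕ, ∑ sa : S × A, |occ π Phat d₀ t sa - occ π Pstar d₀ t sa| ≤
      ∑ k ∈ Finset.range t, 2 * ∑ sa : S × A, occ π Phat d₀ k sa * C sa.1 sa.2 := by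
  intro t
  induction t with
  | zero => simp [occ]
  | succ t ih =>
    have hstep : ∀ sa : S × A,
        occ π Phat d₀ (t+1) sa - occ π Pstar d₀ (t+1) sa =
          stepSA π Pstar (fun p => occ π Phat d₀ t p - occ π Pstar d₀ t p) sa +
          stepSA π (fun s a s' => Phat s a s' - Pstar s a s') (occ π Phat d₀ t) sa := by
      intro sa
      have h1 := stepSA_kernel_sub π Phat Pstar (occ π Phat d₀ t) sa
      have h2 : stepSA π Pstar (fun p => occ π Phat d₀ t p - occ π Pstar d₀ t p) sa =
          stepSA π Pstar (occ π Phat d₀ t) sa - stepSA π Pstar (occ π Pstar d₀ t) sa := by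
        rw [stepSA_sub_dist]
      show stepSA π Phat (occ π Phat d₀ t) sa - stepSA π Pstar (occ π Pstar d₀ t) sa = _
      rw [h2, ← h1]; ring
    have habs : ∀ sa : S × A, |occ π Phat d₀ (t+1) sa - occ π Pstar d₀ (t+1) sa| ≤
        stepSA π Pstar (fun p => |occ π Phat d₀ t p - occ π Pstar d₀ t p|) sa +
        stepSA π (fun s a s' => |Phat s a s' - Pstar s a s'|) (occ π Phat d₀ t) sa := by
      intro sa
      rw [hstep sa]
      refine (abs_add_le _ _).trans (add_le_add ?_ ?_)
      · have h := stepSA_abs_le (P := Pstar) (fun s a => (hπ s).1 a)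
          (fun p => occ π Phat d₀ t p - occ π Pstar d₀ t p) sa
        refine h.trans_eq ?_
        unfold stepSA
        beta_reduce
        refine Finset.sum_congr rfl fun s _ => Finset.sum_congr rfl fun a _ => ?_
        rw [abs_of_nonneg ((hPstar s a).1 _)]
      · have h := stepSA_abs_le (P := fun s a s' => Phat s a s' - Pstar s a s')
          (fun s a => (hπ s).1 a) (occ π Phat d₀ t) sa
        refine h.trans_eq ?_
        unfold stepSA
        beta_reduce
        refine Finset.sum_congr rfl fun s _ => Finset.sum_congr rfl fun a _ => ?_
        rw [abs_of_nonneg ((occ_pmf hπ hPhat hd₀ t).1 (s, a))]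
    calc ∑ sa : S × A, |occ π Phat d₀ (t+1) sa - occ π Pstar d₀ (t+1) sa|
        ≤ ∑ sa : S × A,
            (stepSA π Pstar (fun p => |occ π Phat d₀ t p - occ π Pstar d₀ t p|) sa +
             stepSA π (fun s a s' => |Phat s a s' - Pstar s a s'|) (occ π Phat d₀ t) sa) :=
          Finset.sum_le_sum fun sa _ => habs sa
      _ = (∑ sa : S × A, stepSA π Pstar
              (fun p => |occ π Phat d₀ t p - occ π Pstar d₀ t p|) sa) +
          ∑ sa : S × A, stepSA π (fun s a s' => |Phat s a s' - Pstar s a s'|)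
              (occ π Phat d₀ t) sa := Finset.sum_add_distrib
      _ ≤ (∑ k ∈ Finset.range t, 2 * ∑ sa : S × A, occ π Phat d₀ k sa * C sa.1 sa.2) +
          2 * ∑ sa : S × A, occ π Phat d₀ t sa * C sa.1 sa.2 := by
          refine add_le_add ?_ ?_
          · rw [stepSA_sum (fun s => (hπ s).2)]
            refine le_trans (le_of_eq ?_) ih
            refine Finset.sum_congr rfl fun sa _ => ?_
            rw [(hPstar sa.1 sa.2).2, mul_one]
          · rw [stepSA_sum (fun s => (hπ s).2)]
            rw [Finset.mul_sum]
            refine Finset.sum_le_sum fun sa _ => ?_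
            have htv : ∑ s' : S, |Phat sa.1 sa.2 s' - Pstar sa.1 sa.2 s'| ≤ 2 * C sa.1 sa.2 := by
              have := hTV sa.1 sa.2
              rw [tv] at this
              linarith
            calc occ π Phat d₀ t sa * ∑ s' : S, |Phat sa.1 sa.2 s' - Pstar sa.1 sa.2 s'|
                ≤ occ π Phat d₀ t sa * (2 * C sa.1 sa.2) :=
                  mul_le_mul_of_nonneg_left htv ((occ_pmf hπ hPhat hd₀ t).1 sa)
              _ = 2 * (occ π Phat d₀ t sa * C sa.1 sa.2) := by ring
      _ = ∑ k ∈ Finset.range (t+1), 2 * ∑ sa : S × A, occ π Phat d₀ k sa * C sa.1 sa.2 :=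
          (Finset.sum_range_succ _ _).symm



lemma occ_linear (π : S → A → ℝ) (P : S → A → S → ℝ) (d₀ : S → ℝ) :
    ∀ (t : ℕ) (sa : S × A), occ π P d₀ t sa =
      ∑ s : S, d₀ s * occ π P (fun s' => if s' = s then (1 : ℝ) else 0) t sa := by
  intro t
  induction t with
  | zero =>
    intro sa
    show d₀ sa.1 * π sa.1 sa.2 =
      ∑ s : S, d₀ s * ((if sa.1 = s then (1 : ℝ) else 0) * π sa.1 sa.2)
    rw [Finset.sum_congr rfl (fun s _ => by
      rw [show d₀ s * ((if sa.1 = s then (1 : ℝ) else 0) * π sa.1 sa.2) =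
        (if sa.1 = s then d₀ s * π sa.1 sa.2 else 0) from by split <;> simp])]
    rw [Finset.sum_ite_eq]
    simp
  | succ t ih =>
    intro sa
    show stepSA π P (occ π P d₀ t) sa = _
    unfold stepSA
    calc ∑ s : S, ∑ a : A, occ π P d₀ t (s, a) * P s a sa.1 * π sa.1 sa.2
        = ∑ s : S, ∑ a : A, ∑ s₀ : S,
            d₀ s₀ * occ π P (fun s' => if s' = s₀ then (1:ℝ) else 0) t (s, a) *
              P s a sa.1 * π sa.1 sa.2 := by
          refine Finset.sum_congr rfl fun s _ => Finset.sum_congr rfl fun a _ => ?_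
          rw [ih (s, a), Finset.sum_mul, Finset.sum_mul]
      _ = ∑ s : S, ∑ s₀ : S, ∑ a : A,
            d₀ s₀ * occ π P (fun s' => if s' = s₀ then (1:ℝ) else 0) t (s, a) *
              P s a sa.1 * π sa.1 sa.2 :=
          Finset.sum_congr rfl fun s _ => Finset.sum_comm
      _ = ∑ s₀ : S, ∑ s : S, ∑ a : A,
            d₀ s₀ * occ π P (fun s' => if s' = s₀ then (1:ℝ) else 0) t (s, a) *
              P s a sa.1 * π sa.1 sa.2 := Finset.sum_comm
      _ = ∑ s₀ : S, d₀ s₀ *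
            stepSA π P (occ π P (fun s' => if s' = s₀ then (1:ℝ) else 0) t) sa := by
          refine Finset.sum_congr rfl fun s₀ _ => ?_
          unfold stepSA
          rw [Finset.mul_sum]
          refine Finset.sum_congr rfl fun s _ => ?_
          rw [Finset.mul_sum]
          refine Finset.sum_congr rfl fun a _ => ?_
          ring

lemma dirac_pmf (s : S) : IsPMF (fun s' => if s' = s then (1 : ℝ) else 0) := by
  constructor
  · intro x; dsimp only; split <;> norm_num
  · simp

lemma return_abs_le {r : S → A → ℝ} {Rmax : ℝ} (hr : ∀ s a, |r s a| ≤ Rmax)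
    (hR0 : 0 ≤ Rmax) (hπ : ∀ s, IsPMF (π s)) (hP : ∀ s a, IsPMF (P s a))
    (hd₀ : IsPMF d₀) (t : ℕ) :
    |∑ sa : S × A, occ π P d₀ t sa * r sa.1 sa.2| ≤ Rmax := by
  refine (Finset.abs_sum_le_sum_abs _ _).trans ?_
  calc ∑ sa : S × A, |occ π P d₀ t sa * r sa.1 sa.2|
      ≤ ∑ sa : S × A, occ π P d₀ t sa * Rmax := by
        refine Finset.sum_le_sum fun sa _ => ?_
        rw [abs_mul, abs_of_nonneg ((occ_pmf hπ hP hd₀ t).1 sa)]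
        exact mul_le_mul_of_nonneg_left (hr _ _) ((occ_pmf hπ hP hd₀ t).1 sa)
    _ = Rmax := by rw [← Finset.sum_mul, (occ_pmf hπ hP hd₀ t).2, one_mul]

lemma summable_return {r : S → A → ℝ} {Rmax γ : ℝ} (hr : ∀ s a, |r s a| ≤ Rmax)
    (hR0 : 0 ≤ Rmax) (hπ : ∀ s, IsPMF (π s)) (hP : ∀ s a, IsPMF (P s a))
    (hd₀ : IsPMF d₀) (hγ0 : 0 ≤ γ) (hγ1 : γ < 1) :
    Summable (fun t : ℕ => γ ^ t * ∑ sa : S × A, occ π P d₀ t sa * r sa.1 sa.2) := by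
  refine Summable.of_norm_bounded
    ((summable_geometric_of_lt_one hγ0 hγ1).mul_left Rmax) fun t => ?_
  rw [Real.norm_eq_abs, abs_mul, abs_of_nonneg (pow_nonneg hγ0 t), mul_comm]
  exact mul_le_mul_of_nonneg_right (return_abs_le hr hR0 hπ hP hd₀ t)
    (pow_nonneg hγ0 t)

lemma expReturn_eq {r : S → A → ℝ} {Rmax γ : ℝ} (hr : ∀ s a, |r s a| ≤ Rmax)
    (hR0 : 0 ≤ Rmax) (hπ : ∀ s, IsPMF (π s)) (hP : ∀ s a, IsPMF (P s a))
    (hd₀ : IsPMF d₀) (hγ0 : 0 ≤ γ) (hγ1 : γ < 1) :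
    expReturn π P r γ d₀ =
      ∑' t : ℕ, γ ^ t * ∑ sa : S × A, occ π P d₀ t sa * r sa.1 sa.2 := by
  unfold expReturn valueFn
  have hsumm : ∀ s : S, Summable (fun t : ℕ => d₀ s *
      (γ ^ t * ∑ sa : S × A, occ π P (fun s' => if s' = s then (1:ℝ) else 0) t sa *
        r sa.1 sa.2)) :=
    fun s => (summable_return hr hR0 hπ hP (dirac_pmf s) hγ0 hγ1).mul_left (d₀ s)
  calc ∑ s : S, d₀ s * ∑' t : ℕ, (γ ^ t *
        ∑ sa : S × A, occ π P (fun s' => if s' = s then (1:ℝ) else 0) t sa * r sa.1 sa.2)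
      = ∑ s : S, ∑' t : ℕ, d₀ s * (γ ^ t *
          ∑ sa : S × A, occ π P (fun s' => if s' = s then (1:ℝ) else 0) t sa *
            r sa.1 sa.2) := by
        refine Finset.sum_congr rfl fun s _ => ?_
        rw [tsum_mul_left]
    _ = ∑' t : ℕ, ∑ s : S, d₀ s * (γ ^ t *
          ∑ sa : S × A, occ π P (fun s' => if s' = s then (1:ℝ) else 0) t sa *
            r sa.1 sa.2) := (Summable.tsum_finsetSum fun s _ => hsumm s).symm
    _ = ∑' t : ℕ, γ ^ t * ∑ sa : S × A, occ π P d₀ t sa * r sa.1 sa.2 := by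
        refine tsum_congr fun t => ?_
        calc ∑ s : S, d₀ s * (γ ^ t *
              ∑ sa : S × A, occ π P (fun s' => if s' = s then (1:ℝ) else 0) t sa *
                r sa.1 sa.2)
            = γ ^ t * ∑ s : S, ∑ sa : S × A,
                d₀ s * occ π P (fun s' => if s' = s then (1:ℝ) else 0) t sa *
                  r sa.1 sa.2 := by
              rw [Finset.mul_sum]
              refine Finset.sum_congr rfl fun s _ => ?_
              rw [Finset.mul_sum, Finset.mul_sum, Finset.mul_sum]
              refine Finset.sum_congr rfl fun sa _ => ?_
              ring
          _ = γ ^ t * ∑ sa : S × A, occ π P d₀ t sa * r sa.1 sa.2 := by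
              congr 1
              rw [Finset.sum_comm]
              refine Finset.sum_congr rfl fun sa _ => ?_
              rw [occ_linear π P d₀ t sa, Finset.sum_mul]


lemma fubini_geom {γ : ℝ} (c : ℕ → ℝ) (hc0 : ∀ k, 0 ≤ c k) (hc1 : ∀ k, c k ≤ 1)
    (hγ0 : 0 ≤ γ) (hγ1 : γ < 1) :
    ∑' t : ℕ, γ ^ t * ∑ k ∈ Finset.range t, c k =
      (γ / (1 - γ)) * ∑' k : ℕ, γ ^ k * c k := by
  have hgeo : Summable (fun t : ℕ => γ ^ t) := summable_geometric_of_lt_one hγ0 hγ1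
  set F : ℕ → ℕ → ℝ := fun t k => if k < t then γ ^ t * c k else 0 with hFdef
  have hF0 : ∀ t k, 0 ≤ F t k := by
    intro t k; rw [hFdef]; dsimp only
    split
    · exact mul_nonneg (pow_nonneg hγ0 _) (hc0 _)
    · exact le_refl 0
  have hslice : ∀ t, Summable (fun k => F t k) := by
    intro t
    refine summable_of_ne_finset_zero (s := Finset.range t) fun k hk => ?_
    rw [hFdef]; dsimp only
    rw [if_neg]
    simpa using hk
  have hrow : ∀ t, ∑' k, F t k = γ ^ t * ∑ k ∈ Finset.range t, c k := by
    intro t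
    rw [tsum_eq_sum (s := Finset.range t)
      (fun k hk => by rw [hFdef]; dsimp only; rw [if_neg]; simpa using hk)]
    rw [Finset.mul_sum]
    refine Finset.sum_congr rfl fun k hk => ?_
    rw [hFdef]; dsimp only; rw [if_pos (Finset.mem_range.mp hk)]
  have hrowS : Summable (fun t => ∑' k, F t k) := by
    refine Summable.of_nonneg_of_le (fun t => tsum_nonneg fun k => hF0 t k) (fun t => ?_)
      ((summable_pow_mul_geometric_of_norm_lt_one 1
        (by rwa [Real.norm_eq_abs, abs_of_nonneg hγ0])))
    rw [hrow t]
    calc γ ^ t * ∑ k ∈ Finset.range t, c k ≤ γ ^ t * ∑ _k ∈ Finset.range t, (1:ℝ) :=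
          mul_le_mul_of_nonneg_left (Finset.sum_le_sum fun k _ => hc1 k) (pow_nonneg hγ0 t)
      _ = (t:ℝ) * γ ^ t := by simp [mul_comm]
      _ ≤ (t:ℝ)^1 * γ ^ t := by simp
  have hcol : ∀ k, Summable (fun t => F t k) := by
    intro k
    refine Summable.of_nonneg_of_le (fun t => hF0 t k) (fun t => ?_) hgeo
    rw [hFdef]; dsimp only
    split
    · calc γ ^ t * c k ≤ γ ^ t * 1 := mul_le_mul_of_nonneg_left (hc1 k) (pow_nonneg hγ0 t)
        _ = γ ^ t := mul_one _
    · exact pow_nonneg hγ0 t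
  have hFsum : Summable (Function.uncurry F) := by
    refine (summable_prod_of_nonneg fun p => hF0 p.1 p.2).mpr ⟨hslice, hrowS⟩
  have hcomm := Summable.tsum_comm' hFsum hslice hcol
  have hcoleval : ∀ k, ∑' t, F t k = (γ / (1 - γ)) * (γ ^ k * c k) := by
    intro k
    have hsg : Summable (fun t : ℕ => if k < t then γ ^ t else 0) := by
      refine Summable.of_nonneg_of_le (fun t => ?_) (fun t => ?_) hgeo
      · split
        · exact pow_nonneg hγ0 t
        · exact le_refl 0
      · split
        · exact le_refl _
        · exact pow_nonneg hγ0 t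
    have h1 : (fun t => F t k) = fun t => (if k < t then γ ^ t else 0) * c k := by
      funext t; rw [hFdef]; dsimp only; split <;> simp
    rw [h1, tsum_mul_right]
    have h2 : ∑' t : ℕ, (if k < t then γ ^ t else 0) = γ ^ (k+1) / (1 - γ) := by
      have hadd := Summable.sum_add_tsum_nat_add (f := fun t : ℕ => if k < t then γ ^ t else 0)
        (k+1) hsg
      have hz : ∑ i ∈ Finset.range (k+1), (if k < i then γ ^ i else 0) = 0 := by
        refine Finset.sum_eq_zero fun i hi => ?_
        rw [if_neg]
        exact Nat.not_lt.mpr (Nat.lt_succ_iff.mp (Finset.mem_range.mp hi))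
      have hs : ∀ i : ℕ, (if k < i + (k+1) then γ ^ (i + (k+1)) else 0)
          = γ ^ i * γ ^ (k+1) := by
        intro i
        rw [if_pos (by omega), pow_add]
      rw [hz, zero_add] at hadd
      rw [← hadd]
      calc ∑' i : ℕ, (if k < i + (k+1) then γ ^ (i+(k+1)) else 0)
          = ∑' i : ℕ, γ ^ i * γ ^ (k+1) := tsum_congr hs
        _ = (1-γ)⁻¹ * γ^(k+1) := by
            rw [tsum_mul_right, tsum_geometric_of_lt_one hγ0 hγ1, mul_comm]
        _ = γ ^ (k+1) / (1-γ) := by rw [div_eq_inv_mul]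
    rw [h2, pow_succ]
    ring
  calc ∑' t : ℕ, γ ^ t * ∑ k ∈ Finset.range t, c k
      = ∑' t : ℕ, ∑' k : ℕ, F t k := tsum_congr fun t => (hrow t).symm
    _ = ∑' k : ℕ, ∑' t : ℕ, F t k := hcomm.symm
    _ = ∑' k : ℕ, (γ / (1 - γ)) * (γ ^ k * c k) := tsum_congr hcoleval
    _ = (γ / (1 - γ)) * ∑' k : ℕ, γ ^ k * c k := tsum_mul_left

end Aux


/-- value gap of estimated model:
if `TV(P̂(·|s,a), P*(·|s,a)) ≤ C(s,a)` for all `(s,a)`, then for any policy `π`,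
`V^π_{M̂} − V^π_{M*} ≤ (2γ R_max/(1−γ)²) · E_{d^π_{P̂}}[C]`. -/
theorem stmt5 {S A : Type*} [Fintype S] [Fintype A] [DecidableEq S]
    (π : S → A → ℝ) (Pstar Phat : S → A → S → ℝ) (r : S → A → ℝ)
    (C : S → A → ℝ) (d₀ : S → ℝ) (γ Rmax : ℝ)
    (hπ : ∀ s, IsPMF (π s)) (hPstar : ∀ s a, IsPMF (Pstar s a))
    (hPhat : ∀ s a, IsPMF (Phat s a)) (hd₀ : IsPMF d₀)
    (hr : ∀ s a, |r s a| ≤ Rmax)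
    (hC0 : ∀ s a, 0 ≤ C s a) (hC1 : ∀ s a, C s a ≤ 1)
    (hTV : ∀ s a, tv (Phat s a) (Pstar s a) ≤ C s a)
    (hγ0 : 0 ≤ γ) (hγ1 : γ < 1) :
    expReturn π Phat r γ d₀ - expReturn π Pstar r γ d₀ ≤
      (2 * γ * Rmax / (1 - γ) ^ 2) *
        ∑ sa : S × A, visit π Phat d₀ γ sa * C sa.1 sa.2 := by
  have hS : Nonempty S := by
    by_contra h
    rw [not_nonempty_iff] at h
    have h2 := hd₀.2
    rw [Finset.univ_eq_empty, Finset.sum_empty] at h2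
    norm_num at h2
  obtain ⟨s0⟩ := hS
  have hA : Nonempty A := by
    by_contra h
    rw [not_nonempty_iff] at h
    have h2 := (hπ s0).2
    rw [Finset.univ_eq_empty, Finset.sum_empty] at h2
    norm_num at h2
  obtain ⟨a0⟩ := hA
  have hR0 : 0 ≤ Rmax := le_trans (abs_nonneg _) (hr s0 a0)
  have h1γ : (1:ℝ) - γ ≠ 0 := by linarith
  set c : ℕ → ℝ := fun t => ∑ sa : S × A, occ π Phat d₀ t sa * C sa.1 sa.2 with hc
  have hc0 : ∀ t, 0 ≤ c t := fun t => Finset.sum_nonneg fun sa _ =>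
    mul_nonneg ((occ_pmf hπ hPhat hd₀ t).1 sa) (hC0 _ _)
  have hc1 : ∀ t, c t ≤ 1 := by
    intro t
    calc c t ≤ ∑ sa : S × A, occ π Phat d₀ t sa * 1 := Finset.sum_le_sum fun sa _ =>
          mul_le_mul_of_nonneg_left (hC1 _ _) ((occ_pmf hπ hPhat hd₀ t).1 sa)
      _ = 1 := by
          simp only [mul_one]
          exact (occ_pmf hπ hPhat hd₀ t).2
  have hSgeo : Summable (fun t : ℕ => γ ^ t) := summable_geometric_of_lt_one hγ0 hγ1
  have hShat := summable_return (P := Phat) hr hR0 hπ hPhat hd₀ hγ0 hγ1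
  have hSstar := summable_return (P := Pstar) hr hR0 hπ hPstar hd₀ hγ0 hγ1
  have hbound : ∀ t : ℕ, (γ ^ t * ∑ sa : S × A, occ π Phat d₀ t sa * r sa.1 sa.2)
      - γ ^ t * ∑ sa : S × A, occ π Pstar d₀ t sa * r sa.1 sa.2
      ≤ γ ^ t * (Rmax * (2 * ∑ k ∈ Finset.range t, c k)) := by
    intro t
    rw [← mul_sub]
    refine mul_le_mul_of_nonneg_left ?_ (pow_nonneg hγ0 t)
    rw [← Finset.sum_sub_distrib]
    have h1 : ∑ sa : S × A, (occ π Phat d₀ t sa * r sa.1 sa.2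
        - occ π Pstar d₀ t sa * r sa.1 sa.2)
        ≤ ∑ sa : S × A, |occ π Phat d₀ t sa - occ π Pstar d₀ t sa| * Rmax := by
      refine Finset.sum_le_sum fun sa _ => ?_
      rw [← sub_mul]
      calc (occ π Phat d₀ t sa - occ π Pstar d₀ t sa) * r sa.1 sa.2
          ≤ |(occ π Phat d₀ t sa - occ π Pstar d₀ t sa) * r sa.1 sa.2| := le_abs_self _
        _ = |occ π Phat d₀ t sa - occ π Pstar d₀ t sa| * |r sa.1 sa.2| := abs_mul _ _
        _ ≤ |occ π Phat d₀ t sa - occ π Pstar d₀ t sa| * Rmax :=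
            mul_le_mul_of_nonneg_left (hr _ _) (abs_nonneg _)
    refine h1.trans ?_
    rw [← Finset.sum_mul]
    calc (∑ sa : S × A, |occ π Phat d₀ t sa - occ π Pstar d₀ t sa|) * Rmax
        ≤ (∑ k ∈ Finset.range t, 2 * c k) * Rmax :=
          mul_le_mul_of_nonneg_right (delta_bound hπ hPstar hPhat hd₀ hTV t) hR0
      _ = Rmax * (2 * ∑ k ∈ Finset.range t, c k) := by
          rw [← Finset.mul_sum]; ring
  have hmajS : Summable (fun t : ℕ => γ ^ t * (Rmax * (2 * ∑ k ∈ Finset.range t, c k))) := by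
    refine Summable.of_nonneg_of_le (fun t => ?_) (fun t => ?_)
      ((summable_pow_mul_geometric_of_norm_lt_one 1
        (by rwa [Real.norm_eq_abs, abs_of_nonneg hγ0])).mul_left (Rmax * 2))
    · exact mul_nonneg (pow_nonneg hγ0 t) (mul_nonneg hR0 (mul_nonneg (by norm_num)
        (Finset.sum_nonneg fun k _ => hc0 k)))
    · have hSt : ∑ k ∈ Finset.range t, c k ≤ (t : ℝ) := by
        calc ∑ k ∈ Finset.range t, c k ≤ ∑ _k ∈ Finset.range t, (1:ℝ) :=
              Finset.sum_le_sum fun k _ => hc1 k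
          _ = (t : ℝ) := by simp
      calc γ ^ t * (Rmax * (2 * ∑ k ∈ Finset.range t, c k))
          = Rmax * 2 * ((∑ k ∈ Finset.range t, c k) * γ ^ t) := by ring
        _ ≤ Rmax * 2 * ((t:ℝ) ^ 1 * γ ^ t) := by
            refine mul_le_mul_of_nonneg_left ?_ (by positivity)
            rw [pow_one]
            exact mul_le_mul_of_nonneg_right hSt (pow_nonneg hγ0 t)
  have hsasum : ∀ sa : S × A,
      Summable (fun t : ℕ => γ ^ t * occ π Phat d₀ t sa * C sa.1 sa.2) := by
    intro sa
    refine Summable.of_nonneg_of_le (fun t => ?_) (fun t => ?_) hSgeo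
    · exact mul_nonneg (mul_nonneg (pow_nonneg hγ0 t)
        ((occ_pmf hπ hPhat hd₀ t).1 sa)) (hC0 _ _)
    · calc γ ^ t * occ π Phat d₀ t sa * C sa.1 sa.2
          ≤ γ ^ t * occ π Phat d₀ t sa * 1 :=
            mul_le_mul_of_nonneg_left (hC1 _ _)
              (mul_nonneg (pow_nonneg hγ0 t) ((occ_pmf hπ hPhat hd₀ t).1 sa))
        _ = γ ^ t * occ π Phat d₀ t sa := mul_one _
        _ ≤ γ ^ t * 1 := mul_le_mul_of_nonneg_left
            (occ_le_one hπ hPhat hd₀ t sa) (pow_nonneg hγ0 t)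
        _ = γ ^ t := mul_one _
  have hvisit : ∑ sa : S × A, visit π Phat d₀ γ sa * C sa.1 sa.2
      = (1 - γ) * ∑' t : ℕ, γ ^ t * c t := by
    unfold visit
    calc ∑ sa : S × A, ((1 - γ) * ∑' t : ℕ, γ ^ t * occ π Phat d₀ t sa) * C sa.1 sa.2
        = (1 - γ) * ∑ sa : S × A, ∑' t : ℕ, γ ^ t * occ π Phat d₀ t sa * C sa.1 sa.2 := by
          rw [Finset.mul_sum]
          refine Finset.sum_congr rfl fun sa _ => ?_
          rw [mul_assoc]
          congr 1
          rw [← tsum_mul_right]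
      _ = (1 - γ) * ∑' t : ℕ, ∑ sa : S × A, γ ^ t * occ π Phat d₀ t sa * C sa.1 sa.2 := by
          congr 1
          exact (Summable.tsum_finsetSum fun sa _ => hsasum sa).symm
      _ = (1 - γ) * ∑' t : ℕ, γ ^ t * c t := by
          congr 1
          refine tsum_congr fun t => ?_
          rw [hc]
          dsimp only
          rw [Finset.mul_sum]
          exact Finset.sum_congr rfl fun sa _ => mul_assoc _ _ _
  calc expReturn π Phat r γ d₀ - expReturn π Pstar r γ d₀
      = ∑' t : ℕ, ((γ ^ t * ∑ sa : S × A, occ π Phat d₀ t sa * r sa.1 sa.2)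
          - γ ^ t * ∑ sa : S × A, occ π Pstar d₀ t sa * r sa.1 sa.2) := by
        rw [expReturn_eq hr hR0 hπ hPhat hd₀ hγ0 hγ1,
          expReturn_eq hr hR0 hπ hPstar hd₀ hγ0 hγ1, ← Summable.tsum_sub hShat hSstar]
    _ ≤ ∑' t : ℕ, γ ^ t * (Rmax * (2 * ∑ k ∈ Finset.range t, c k)) :=
        Summable.tsum_le_tsum hbound (hShat.sub hSstar) hmajS
    _ = (Rmax * 2) * ∑' t : ℕ, γ ^ t * ∑ k ∈ Finset.range t, c k := by
        rw [← tsum_mul_left]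
        exact tsum_congr fun t => by ring
    _ = (Rmax * 2) * ((γ / (1 - γ)) * ∑' k : ℕ, γ ^ k * c k) := by
        rw [fubini_geom c hc0 hc1 hγ0 hγ1]
    _ = (2 * γ * Rmax / (1 - γ) ^ 2) * ((1 - γ) * ∑' k : ℕ, γ ^ k * c k) := by
        field_simp
    _ = (2 * γ * Rmax / (1 - γ) ^ 2) *
          ∑ sa : S × A, visit π Phat d₀ γ sa * C sa.1 sa.2 := by
        rw [hvisit]
end

section
/- (Exact value-gap bound with nonnegative rewards.) Let M* and M̂ be finite MDPs with common reward r satisfying 0 ≤ r(s,a) ≤ R_max, common d₀ and γ ∈ [0,1), transitions P* and P̂. If TV(P̂(·|s,a),P*(·|s,a)) ≤ C(s,a) for all (s,a), then for any policy π, V^π_{M̂} − V^π_{M*} ≤ (γ·R_max/(1−γ)²)·E_{(s,a)∼d^π_{P̂}}[C(s,a)]. -/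
open Finset

/- ======================= Auxiliary lemmas ======================= -/

section Aux18
set_option linter.unusedSectionVars false
variable {S A : Type*} [Fintype S] [Fintype A] [DecidableEq S]
variable {π : S → A → ℝ} {P : S → A → S → ℝ} {μ₀ d₀ : S → ℝ}

lemma tv_nonneg' {X : Type*} [Fintype X] (p q : X → ℝ) : 0 ≤ tv p q :=
  mul_nonneg (by norm_num) (Finset.sum_nonneg fun x _ => abs_nonneg _)

lemma quad_sum18 (f : S → A → S → ℝ) (hπ : ∀ s, IsPMF (π s)) :
    ∑ s' : S, ∑ a' : A, (∑ s : S, ∑ a : A, f s a s') * π s' a' =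
      ∑ s : S, ∑ a : A, ∑ s' : S, f s a s' := by
  have h1 : ∀ s' : S, ∑ a' : A, (∑ s : S, ∑ a : A, f s a s') * π s' a'
      = ∑ s : S, ∑ a : A, f s a s' := by
    intro s'
    rw [← Finset.mul_sum, (hπ s').2, mul_one]
  simp_rw [h1]
  rw [Finset.sum_comm]
  exact Finset.sum_congr rfl fun s _ => Finset.sum_comm

lemma occ_pmf18 (hπ : ∀ s, IsPMF (π s)) (hP : ∀ s a, IsPMF (P s a)) (hμ₀ : IsPMF μ₀) :
    ∀ t, IsPMF (occ π P μ₀ t) := by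
  intro t
  induction t with
  | zero =>
    constructor
    · intro sa; exact mul_nonneg (hμ₀.1 _) ((hπ _).1 _)
    · rw [Fintype.sum_prod_type]
      simp only [occ]
      calc ∑ s : S, ∑ a : A, μ₀ s * π s a = ∑ s : S, μ₀ s * ∑ a : A, π s a := by
            simp_rw [Finset.mul_sum]
        _ = 1 := by simp_rw [fun s => (hπ s).2]; simpa using hμ₀.2
  | succ t ih =>
    constructor
    · intro sa
      apply Finset.sum_nonneg; intro s _
      apply Finset.sum_nonneg; intro a _
      exact mul_nonneg (mul_nonneg (ih.1 _) ((hP _ _).1 _)) ((hπ _).1 _)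
    · show ∑ sa : S × A, stepSA π P (occ π P μ₀ t) sa = 1
      unfold stepSA
      rw [Fintype.sum_prod_type]
      have : ∀ s' : S, ∀ a' : A, ∑ s : S, ∑ a : A, occ π P μ₀ t (s, a) * P s a s' * π s' a'
          = (∑ s : S, ∑ a : A, occ π P μ₀ t (s, a) * P s a s') * π s' a' := by
        intro s' a'; simp_rw [Finset.sum_mul]
      simp_rw [this]
      rw [quad_sum18 _ hπ]
      calc ∑ s : S, ∑ a : A, ∑ s' : S, occ π P μ₀ t (s, a) * P s a s'
          = ∑ s : S, ∑ a : A, occ π P μ₀ t (s, a) := by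
            simp_rw [← Finset.mul_sum]
            exact Finset.sum_congr rfl fun s _ => Finset.sum_congr rfl fun a _ => by
              rw [(hP s a).2, mul_one]
        _ = 1 := by rw [← Fintype.sum_prod_type]; exact ih.2

lemma occ_linear18 (d₀ : S → ℝ) :
    ∀ t (sa : S × A), occ π P d₀ t sa =
      ∑ s : S, d₀ s * occ π P (fun s' => if s' = s then (1 : ℝ) else 0) t sa := by
  intro t
  induction t with
  | zero =>
    intro sa
    simp only [occ]
    simp [ite_mul, mul_ite, Finset.sum_ite_eq']
  | succ t ih =>
    intro sa
    show stepSA π P (occ π P d₀ t) sa = _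
    unfold stepSA
    calc ∑ s : S, ∑ a : A, occ π P d₀ t (s, a) * P s a sa.1 * π sa.1 sa.2
        = ∑ s : S, ∑ a : A, ∑ s0 : S,
            d₀ s0 * (occ π P (fun s' => if s' = s0 then (1:ℝ) else 0) t (s, a) * P s a sa.1 * π sa.1 sa.2) := by
          refine Finset.sum_congr rfl fun s _ => Finset.sum_congr rfl fun a _ => ?_
          rw [ih (s, a), Finset.sum_mul, Finset.sum_mul]
          exact Finset.sum_congr rfl fun s0 _ => by ring
      _ = ∑ s : S, ∑ s0 : S, ∑ a : A,
            d₀ s0 * (occ π P (fun s' => if s' = s0 then (1:ℝ) else 0) t (s, a) * P s a sa.1 * π sa.1 sa.2) :=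
          Finset.sum_congr rfl fun s _ => Finset.sum_comm
      _ = ∑ s0 : S, ∑ s : S, ∑ a : A,
            d₀ s0 * (occ π P (fun s' => if s' = s0 then (1:ℝ) else 0) t (s, a) * P s a sa.1 * π sa.1 sa.2) :=
          Finset.sum_comm
      _ = ∑ s0 : S, d₀ s0 * ∑ s : S, ∑ a : A,
            occ π P (fun s' => if s' = s0 then (1:ℝ) else 0) t (s, a) * P s a sa.1 * π sa.1 sa.2 := by
          simp_rw [← Finset.mul_sum]
      _ = _ := by
          refine Finset.sum_congr rfl fun s0 _ => ?_
          rfl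

lemma step_l118 {Pstar Phat : S → A → S → ℝ}
    (hπ : ∀ s, IsPMF (π s)) (hPs : ∀ s a, IsPMF (Pstar s a))
    (μh μs : S × A → ℝ) (hμh0 : ∀ sa, 0 ≤ μh sa) (C : S → A → ℝ)
    (hTV : ∀ s a, tv (Phat s a) (Pstar s a) ≤ C s a) :
    ∑ sa : S × A, |stepSA π Phat μh sa - stepSA π Pstar μs sa| ≤
      (∑ sa : S × A, |μh sa - μs sa|) + 2 * ∑ sa : S × A, μh sa * C sa.1 sa.2 := by
  set F : S → A → S → ℝ := fun s a s' =>
    |μh (s,a) - μs (s,a)| * Pstar s a s' + μh (s,a) * |Phat s a s' - Pstar s a s'| with hF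
  have key : ∀ sa : S × A, |stepSA π Phat μh sa - stepSA π Pstar μs sa| ≤
      (∑ s : S, ∑ a : A, F s a sa.1) * π sa.1 sa.2 := by
    intro sa
    have hrw : stepSA π Phat μh sa - stepSA π Pstar μs sa =
        (∑ s : S, ∑ a : A, ((μh (s,a) - μs (s,a)) * Pstar s a sa.1
          + μh (s,a) * (Phat s a sa.1 - Pstar s a sa.1))) * π sa.1 sa.2 := by
      unfold stepSA
      rw [← Finset.sum_sub_distrib, Finset.sum_mul]
      refine Finset.sum_congr rfl fun s _ => ?_
      rw [← Finset.sum_sub_distrib, Finset.sum_mul]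
      exact Finset.sum_congr rfl fun a _ => by ring
    rw [hrw, abs_mul, abs_of_nonneg ((hπ _).1 _)]
    refine mul_le_mul_of_nonneg_right ?_ ((hπ _).1 _)
    calc |∑ s : S, ∑ a : A, ((μh (s,a) - μs (s,a)) * Pstar s a sa.1
          + μh (s,a) * (Phat s a sa.1 - Pstar s a sa.1))|
        ≤ ∑ s : S, |∑ a : A, ((μh (s,a) - μs (s,a)) * Pstar s a sa.1
          + μh (s,a) * (Phat s a sa.1 - Pstar s a sa.1))| := Finset.abs_sum_le_sum_abs _ _
      _ ≤ ∑ s : S, ∑ a : A, |(μh (s,a) - μs (s,a)) * Pstar s a sa.1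
          + μh (s,a) * (Phat s a sa.1 - Pstar s a sa.1)| :=
          Finset.sum_le_sum fun s _ => Finset.abs_sum_le_sum_abs _ _
      _ ≤ ∑ s : S, ∑ a : A, F s a sa.1 := by
          refine Finset.sum_le_sum fun s _ => Finset.sum_le_sum fun a _ => ?_
          calc |(μh (s,a) - μs (s,a)) * Pstar s a sa.1
              + μh (s,a) * (Phat s a sa.1 - Pstar s a sa.1)|
              ≤ |(μh (s,a) - μs (s,a)) * Pstar s a sa.1|
                + |μh (s,a) * (Phat s a sa.1 - Pstar s a sa.1)| := abs_add_le _ _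
            _ = F s a sa.1 := by
                rw [hF]
                rw [abs_mul, abs_mul, abs_of_nonneg ((hPs s a).1 _), abs_of_nonneg (hμh0 _)]
  calc ∑ sa : S × A, |stepSA π Phat μh sa - stepSA π Pstar μs sa|
      ≤ ∑ sa : S × A, (∑ s : S, ∑ a : A, F s a sa.1) * π sa.1 sa.2 :=
        Finset.sum_le_sum fun sa _ => key sa
    _ = ∑ s' : S, ∑ a' : A, (∑ s : S, ∑ a : A, F s a s') * π s' a' := by
        rw [Fintype.sum_prod_type]
    _ = ∑ s : S, ∑ a : A, ∑ s' : S, F s a s' := quad_sum18 _ hπ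
    _ = ∑ s : S, ∑ a : A, (|μh (s,a) - μs (s,a)|
          + μh (s,a) * (2 * tv (Phat s a) (Pstar s a))) := by
        refine Finset.sum_congr rfl fun s _ => Finset.sum_congr rfl fun a _ => ?_
        rw [hF]
        simp only
        rw [Finset.sum_add_distrib, ← Finset.mul_sum, ← Finset.mul_sum, (hPs s a).2, mul_one]
        unfold tv
        ring
    _ ≤ ∑ s : S, ∑ a : A, (|μh (s,a) - μs (s,a)| + μh (s,a) * (2 * C s a)) := by
        refine Finset.sum_le_sum fun s _ => Finset.sum_le_sum fun a _ => ?_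
        have h2 : 2 * tv (Phat s a) (Pstar s a) ≤ 2 * C s a := by
          have := hTV s a; linarith
        exact add_le_add_right (mul_le_mul_of_nonneg_left h2 (hμh0 _)) _
    _ = (∑ sa : S × A, |μh sa - μs sa|) + 2 * ∑ sa : S × A, μh sa * C sa.1 sa.2 := by
        rw [Fintype.sum_prod_type, Fintype.sum_prod_type, Finset.mul_sum]
        rw [← Finset.sum_add_distrib]
        refine Finset.sum_congr rfl fun s _ => ?_
        rw [Finset.mul_sum, ← Finset.sum_add_distrib]
        exact Finset.sum_congr rfl fun a _ => by ring

lemma l1_bound18 {Pstar Phat : S → A → S → ℝ}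
    (hπ : ∀ s, IsPMF (π s)) (hPs : ∀ s a, IsPMF (Pstar s a))
    (hPh : ∀ s a, IsPMF (Phat s a)) (hd₀ : IsPMF d₀) (C : S → A → ℝ)
    (hTV : ∀ s a, tv (Phat s a) (Pstar s a) ≤ C s a) :
    ∀ t, ∑ sa : S × A, |occ π Phat d₀ t sa - occ π Pstar d₀ t sa| ≤
      2 * ∑ k ∈ Finset.range t, ∑ sa : S × A, occ π Phat d₀ k sa * C sa.1 sa.2 := by
  intro t
  induction t with
  | zero => simp [occ]
  | succ t ih =>
    have hstep := step_l118 hπ hPs (occ π Phat d₀ t) (occ π Pstar d₀ t)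
      ((occ_pmf18 hπ hPh hd₀ t).1) C hTV
    rw [Finset.sum_range_succ]
    show ∑ sa : S × A,
        |stepSA π Phat (occ π Phat d₀ t) sa - stepSA π Pstar (occ π Pstar d₀ t) sa| ≤ _
    linarith

lemma pmf_dirac18 (s : S) : IsPMF (fun s' => if s' = s then (1:ℝ) else 0) := by
  constructor
  · intro x; dsimp only; split <;> norm_num
  · simp

lemma exp_bounds18 {μ : S × A → ℝ} (hμ : IsPMF μ) {r : S → A → ℝ} {Rmax : ℝ}
    (hr0 : ∀ s a, 0 ≤ r s a) (hr1 : ∀ s a, r s a ≤ Rmax) :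
    0 ≤ ∑ sa : S × A, μ sa * r sa.1 sa.2 ∧ ∑ sa : S × A, μ sa * r sa.1 sa.2 ≤ Rmax := by
  constructor
  · exact Finset.sum_nonneg fun sa _ => mul_nonneg (hμ.1 _) (hr0 _ _)
  · calc ∑ sa : S × A, μ sa * r sa.1 sa.2
        ≤ ∑ sa : S × A, μ sa * Rmax :=
          Finset.sum_le_sum fun sa _ => mul_le_mul_of_nonneg_left (hr1 _ _) (hμ.1 _)
      _ = Rmax := by rw [← Finset.sum_mul, hμ.2, one_mul]

lemma summable_geom_bound18 {f : ℕ → ℝ} {B γ : ℝ} (hγ0 : 0 ≤ γ) (hγ1 : γ < 1)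
    (h : ∀ t, |f t| ≤ B * γ ^ t) : Summable f :=
  Summable.of_abs (Summable.of_nonneg_of_le (fun _ => abs_nonneg _) h
    ((summable_geometric_of_lt_one hγ0 hγ1).mul_left B))

lemma expReturn_eq18 {r : S → A → ℝ} {Rmax γ : ℝ}
    (hπ : ∀ s, IsPMF (π s)) (hP : ∀ s a, IsPMF (P s a)) (hd₀ : IsPMF d₀)
    (hr0 : ∀ s a, 0 ≤ r s a) (hr1 : ∀ s a, r s a ≤ Rmax)
    (hγ0 : 0 ≤ γ) (hγ1 : γ < 1) :
    expReturn π P r γ d₀ =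
      ∑' t : ℕ, γ ^ t * ∑ sa : S × A, occ π P d₀ t sa * r sa.1 sa.2 := by
  have hs : ∀ s : S, Summable (fun t : ℕ => d₀ s *
      (γ ^ t * ∑ sa : S × A, occ π P (fun s' => if s' = s then (1:ℝ) else 0) t sa * r sa.1 sa.2)) := by
    intro s
    apply summable_geom_bound18 (B := d₀ s * Rmax) hγ0 hγ1
    intro t
    have hb := exp_bounds18 (occ_pmf18 hπ hP (pmf_dirac18 s) t) hr0 hr1
    rw [abs_mul, abs_mul, abs_of_nonneg (hd₀.1 s), abs_of_nonneg (pow_nonneg hγ0 t),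
      abs_of_nonneg hb.1]
    calc d₀ s * (γ ^ t * ∑ sa : S × A,
          occ π P (fun s' => if s' = s then (1:ℝ) else 0) t sa * r sa.1 sa.2)
        ≤ d₀ s * (γ ^ t * Rmax) := by
          refine mul_le_mul_of_nonneg_left ?_ (hd₀.1 s)
          exact mul_le_mul_of_nonneg_left hb.2 (pow_nonneg hγ0 t)
      _ = d₀ s * Rmax * γ ^ t := by ring
  unfold expReturn valueFn
  calc ∑ s : S, d₀ s * ∑' t : ℕ, γ ^ t *
        ∑ sa : S × A, occ π P (fun s' => if s' = s then (1:ℝ) else 0) t sa * r sa.1 sa.2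
      = ∑ s : S, ∑' t : ℕ, d₀ s * (γ ^ t *
        ∑ sa : S × A, occ π P (fun s' => if s' = s then (1:ℝ) else 0) t sa * r sa.1 sa.2) := by
        refine Finset.sum_congr rfl fun s _ => ?_
        rw [tsum_mul_left]
    _ = ∑' t : ℕ, ∑ s : S, d₀ s * (γ ^ t *
        ∑ sa : S × A, occ π P (fun s' => if s' = s then (1:ℝ) else 0) t sa * r sa.1 sa.2) :=
        (Summable.tsum_finsetSum fun s _ => hs s).symm
    _ = ∑' t : ℕ, γ ^ t * ∑ sa : S × A, occ π P d₀ t sa * r sa.1 sa.2 := by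
        refine tsum_congr fun t => ?_
        have h1 : ∑ sa : S × A, occ π P d₀ t sa * r sa.1 sa.2
            = ∑ s : S, d₀ s * ∑ sa : S × A,
              occ π P (fun s' => if s' = s then (1:ℝ) else 0) t sa * r sa.1 sa.2 := by
          calc ∑ sa : S × A, occ π P d₀ t sa * r sa.1 sa.2
              = ∑ sa : S × A, ∑ s : S, d₀ s *
                occ π P (fun s' => if s' = s then (1:ℝ) else 0) t sa * r sa.1 sa.2 := by
                refine Finset.sum_congr rfl fun sa _ => ?_
                rw [occ_linear18 d₀ t sa, Finset.sum_mul]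
            _ = ∑ s : S, ∑ sa : S × A, d₀ s *
                occ π P (fun s' => if s' = s then (1:ℝ) else 0) t sa * r sa.1 sa.2 :=
                Finset.sum_comm
            _ = _ := by
                refine Finset.sum_congr rfl fun s _ => ?_
                rw [Finset.mul_sum]
                exact Finset.sum_congr rfl fun sa _ => by ring
        rw [h1, Finset.mul_sum]
        exact Finset.sum_congr rfl fun s _ => by ring

lemma geom_identity18 (γ : ℝ) (c : ℕ → ℝ) (hγ : γ ≠ 1) (N : ℕ) :
    ∑ t ∈ Finset.range N, γ ^ t * (∑ k ∈ Finset.range t, c k)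
      + γ ^ N / (1 - γ) * (∑ k ∈ Finset.range N, c k)
    = ∑ k ∈ Finset.range N, γ ^ (k + 1) / (1 - γ) * c k := by
  induction N with
  | zero => simp
  | succ N ih =>
    rw [Finset.sum_range_succ, Finset.sum_range_succ,
      Finset.sum_range_succ (fun k => γ ^ (k+1) / (1-γ) * c k)]
    rw [← ih]
    have h1 : (1 : ℝ) - γ ≠ 0 := sub_ne_zero.mpr (Ne.symm hγ)
    field_simp
    ring

end Aux18

/-- exact value-gap bound with nonnegative rewards: if
`0 ≤ r(s,a) ≤ R_max` and `TV(P̂(·|s,a),P*(·|s,a)) ≤ C(s,a)` for all `(s,a)`,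
then for any policy `π`,
`V^π_{M̂} − V^π_{M*} ≤ (γR_max/(1−γ)²)·E_{d^π_{P̂}}[C]`. -/
theorem stmt18 {S A : Type*} [Fintype S] [Fintype A] [DecidableEq S]
    (π : S → A → ℝ) (Pstar Phat : S → A → S → ℝ) (r : S → A → ℝ)
    (C : S → A → ℝ) (d₀ : S → ℝ) (γ Rmax : ℝ)
    (hπ : ∀ s, IsPMF (π s)) (hPstar : ∀ s a, IsPMF (Pstar s a))
    (hPhat : ∀ s a, IsPMF (Phat s a)) (hd₀ : IsPMF d₀)
    (hr0 : ∀ s a, 0 ≤ r s a) (hr1 : ∀ s a, r s a ≤ Rmax)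
    (hTV : ∀ s a, tv (Phat s a) (Pstar s a) ≤ C s a)
    (hγ0 : 0 ≤ γ) (hγ1 : γ < 1) :
    expReturn π Phat r γ d₀ - expReturn π Pstar r γ d₀ ≤
      (γ * Rmax / (1 - γ) ^ 2) *
        ∑ sa : S × A, visit π Phat d₀ γ sa * C sa.1 sa.2 := by
  have h1γ : (0:ℝ) < 1 - γ := by linarith
  have h1γ' : (1:ℝ) - γ ≠ 0 := ne_of_gt h1γ
  -- nonemptiness and Rmax ≥ 0
  have hS : Nonempty S := by
    by_contra h
    rw [not_nonempty_iff] at h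
    have := hd₀.2
    simp [Finset.univ_eq_empty] at this
  obtain ⟨s₀⟩ := hS
  have hA : Nonempty A := by
    by_contra h
    rw [not_nonempty_iff] at h
    have := (hπ s₀).2
    simp [Finset.univ_eq_empty] at this
  obtain ⟨a₀⟩ := hA
  have hRmax : 0 ≤ Rmax := (hr0 s₀ a₀).trans (hr1 s₀ a₀)
  have hC0 : ∀ s a, 0 ≤ C s a := fun s a => le_trans (tv_nonneg' _ _) (hTV s a)
  have hμhP : ∀ t, IsPMF (occ π Phat d₀ t) := occ_pmf18 hπ hPhat hd₀
  have hμsP : ∀ t, IsPMF (occ π Pstar d₀ t) := occ_pmf18 hπ hPstar hd₀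
  -- c and its bounds
  have hc0 : ∀ t, 0 ≤ ∑ sa : S × A, occ π Phat d₀ t sa * C sa.1 sa.2 := fun t =>
    Finset.sum_nonneg fun sa _ => mul_nonneg ((hμhP t).1 _) (hC0 _ _)
  have hCm0 : 0 ≤ ∑ sa : S × A, C sa.1 sa.2 :=
    Finset.sum_nonneg fun sa _ => hC0 _ _
  have hcCm : ∀ t, ∑ sa : S × A, occ π Phat d₀ t sa * C sa.1 sa.2 ≤ ∑ sa : S × A, C sa.1 sa.2 := by
    intro t
    refine Finset.sum_le_sum fun sa _ => ?_
    have hle1 : occ π Phat d₀ t sa ≤ 1 := by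
      have := Finset.single_le_sum (f := occ π Phat d₀ t) (fun x _ => (hμhP t).1 x)
        (Finset.mem_univ sa)
      rw [(hμhP t).2] at this
      exact this
    calc occ π Phat d₀ t sa * C sa.1 sa.2 ≤ 1 * C sa.1 sa.2 :=
          mul_le_mul_of_nonneg_right hle1 (hC0 _ _)
      _ = C sa.1 sa.2 := one_mul _
  have hE0 : ∀ t, 0 ≤ ∑ k ∈ Finset.range t, ∑ sa : S × A, occ π Phat d₀ k sa * C sa.1 sa.2 :=
    fun t => Finset.sum_nonneg fun k _ => hc0 k
  -- per-step value gap
  have hgap : ∀ t, (∑ sa : S × A, occ π Phat d₀ t sa * r sa.1 sa.2)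
      - (∑ sa : S × A, occ π Pstar d₀ t sa * r sa.1 sa.2)
      ≤ Rmax * ∑ k ∈ Finset.range t, ∑ sa : S × A, occ π Phat d₀ k sa * C sa.1 sa.2 := by
    intro t
    have hD := l1_bound18 hπ hPstar hPhat hd₀ C hTV t
    have hsub : ∑ sa : S × A, (occ π Phat d₀ t sa - occ π Pstar d₀ t sa) = 0 := by
      rw [Finset.sum_sub_distrib, (hμhP t).2, (hμsP t).2, sub_self]
    calc (∑ sa : S × A, occ π Phat d₀ t sa * r sa.1 sa.2)
          - (∑ sa : S × A, occ π Pstar d₀ t sa * r sa.1 sa.2)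
        = ∑ sa : S × A, (occ π Phat d₀ t sa - occ π Pstar d₀ t sa) * r sa.1 sa.2 := by
          rw [← Finset.sum_sub_distrib]
          exact Finset.sum_congr rfl fun sa _ => by ring
      _ ≤ ∑ sa : S × A, (|occ π Phat d₀ t sa - occ π Pstar d₀ t sa|
            + (occ π Phat d₀ t sa - occ π Pstar d₀ t sa)) / 2 * Rmax := by
          refine Finset.sum_le_sum fun sa _ => ?_
          rcases le_or_gt 0 (occ π Phat d₀ t sa - occ π Pstar d₀ t sa) with h | h
          · calc (occ π Phat d₀ t sa - occ π Pstar d₀ t sa) * r sa.1 sa.2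
                ≤ (occ π Phat d₀ t sa - occ π Pstar d₀ t sa) * Rmax :=
                  mul_le_mul_of_nonneg_left (hr1 _ _) h
              _ = _ := by rw [abs_of_nonneg h]; ring
          · have hz : (|occ π Phat d₀ t sa - occ π Pstar d₀ t sa|
                + (occ π Phat d₀ t sa - occ π Pstar d₀ t sa)) / 2 * Rmax = 0 := by
              rw [abs_of_neg h]; ring
            rw [hz]
            have := hr0 sa.1 sa.2
            nlinarith [h.le, hr0 sa.1 sa.2]
      _ = Rmax / 2 * ((∑ sa : S × A, |occ π Phat d₀ t sa - occ π Pstar d₀ t sa|)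
            + ∑ sa : S × A, (occ π Phat d₀ t sa - occ π Pstar d₀ t sa)) := by
          rw [← Finset.sum_add_distrib, Finset.mul_sum]
          exact Finset.sum_congr rfl fun sa _ => by ring
      _ = Rmax / 2 * ∑ sa : S × A, |occ π Phat d₀ t sa - occ π Pstar d₀ t sa| := by
          rw [hsub, add_zero]
      _ ≤ Rmax / 2 * (2 * ∑ k ∈ Finset.range t,
            ∑ sa : S × A, occ π Phat d₀ k sa * C sa.1 sa.2) :=
          mul_le_mul_of_nonneg_left hD (by linarith)
      _ = Rmax * ∑ k ∈ Finset.range t, ∑ sa : S × A, occ π Phat d₀ k sa * C sa.1 sa.2 := by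
          ring
  -- summabilities
  have hsρh : Summable (fun t : ℕ => γ ^ t * ∑ sa : S × A, occ π Phat d₀ t sa * r sa.1 sa.2) := by
    apply summable_geom_bound18 (B := Rmax) hγ0 hγ1
    intro t
    have hb := exp_bounds18 (hμhP t) hr0 hr1
    rw [abs_mul, abs_of_nonneg (pow_nonneg hγ0 t), abs_of_nonneg hb.1]
    calc γ ^ t * ∑ sa : S × A, occ π Phat d₀ t sa * r sa.1 sa.2
        ≤ γ ^ t * Rmax := mul_le_mul_of_nonneg_left hb.2 (pow_nonneg hγ0 t)
      _ = Rmax * γ ^ t := mul_comm _ _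
  have hsρs : Summable (fun t : ℕ => γ ^ t * ∑ sa : S × A, occ π Pstar d₀ t sa * r sa.1 sa.2) := by
    apply summable_geom_bound18 (B := Rmax) hγ0 hγ1
    intro t
    have hb := exp_bounds18 (hμsP t) hr0 hr1
    rw [abs_mul, abs_of_nonneg (pow_nonneg hγ0 t), abs_of_nonneg hb.1]
    calc γ ^ t * ∑ sa : S × A, occ π Pstar d₀ t sa * r sa.1 sa.2
        ≤ γ ^ t * Rmax := mul_le_mul_of_nonneg_left hb.2 (pow_nonneg hγ0 t)
      _ = Rmax * γ ^ t := mul_comm _ _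
  have hsc : Summable (fun t : ℕ => γ ^ t * ∑ sa : S × A, occ π Phat d₀ t sa * C sa.1 sa.2) := by
    apply summable_geom_bound18 (B := ∑ sa : S × A, C sa.1 sa.2) hγ0 hγ1
    intro t
    rw [abs_mul, abs_of_nonneg (pow_nonneg hγ0 t), abs_of_nonneg (hc0 t)]
    calc γ ^ t * ∑ sa : S × A, occ π Phat d₀ t sa * C sa.1 sa.2
        ≤ γ ^ t * ∑ sa : S × A, C sa.1 sa.2 :=
          mul_le_mul_of_nonneg_left (hcCm t) (pow_nonneg hγ0 t)
      _ = (∑ sa : S × A, C sa.1 sa.2) * γ ^ t := mul_comm _ _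
  have hsE : Summable (fun t : ℕ => γ ^ t *
      ∑ k ∈ Finset.range t, ∑ sa : S × A, occ π Phat d₀ k sa * C sa.1 sa.2) := by
    have hbase : Summable (fun t : ℕ =>
        (∑ sa : S × A, C sa.1 sa.2) * ((t : ℝ) * γ ^ t)) := by
      have h := summable_pow_mul_geometric_of_norm_lt_one (R := ℝ) 1
        (r := γ) (by rwa [Real.norm_eq_abs, abs_of_nonneg hγ0])
      simpa using h.mul_left (∑ sa : S × A, C sa.1 sa.2)
    refine Summable.of_nonneg_of_le (fun t => mul_nonneg (pow_nonneg hγ0 t) (hE0 t))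
      (fun t => ?_) hbase
    have hEt : ∑ k ∈ Finset.range t, ∑ sa : S × A, occ π Phat d₀ k sa * C sa.1 sa.2
        ≤ (t : ℝ) * ∑ sa : S × A, C sa.1 sa.2 := by
      calc ∑ k ∈ Finset.range t, ∑ sa : S × A, occ π Phat d₀ k sa * C sa.1 sa.2
          ≤ ∑ _k ∈ Finset.range t, ∑ sa : S × A, C sa.1 sa.2 :=
            Finset.sum_le_sum fun k _ => hcCm k
        _ = (t : ℝ) * ∑ sa : S × A, C sa.1 sa.2 := by
            rw [Finset.sum_const, Finset.card_range, nsmul_eq_mul]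
    calc γ ^ t * ∑ k ∈ Finset.range t, ∑ sa : S × A, occ π Phat d₀ k sa * C sa.1 sa.2
        ≤ γ ^ t * ((t : ℝ) * ∑ sa : S × A, C sa.1 sa.2) :=
          mul_le_mul_of_nonneg_left hEt (pow_nonneg hγ0 t)
      _ = (∑ sa : S × A, C sa.1 sa.2) * ((t : ℝ) * γ ^ t) := by ring
  -- the key tsum bound
  have h3 : ∑' t : ℕ, γ ^ t *
      (∑ k ∈ Finset.range t, ∑ sa : S × A, occ π Phat d₀ k sa * C sa.1 sa.2)
      ≤ γ / (1 - γ) * ∑' t : ℕ, γ ^ t * ∑ sa : S × A, occ π Phat d₀ t sa * C sa.1 sa.2 := by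
    apply Summable.tsum_le_of_sum_range_le hsE
    intro N
    have hid := geom_identity18 γ
      (fun k => ∑ sa : S × A, occ π Phat d₀ k sa * C sa.1 sa.2) (ne_of_lt hγ1) N
    have h0 : 0 ≤ γ ^ N / (1 - γ) *
        ∑ k ∈ Finset.range N, ∑ sa : S × A, occ π Phat d₀ k sa * C sa.1 sa.2 :=
      mul_nonneg (div_nonneg (pow_nonneg hγ0 N) h1γ.le) (hE0 N)
    calc ∑ t ∈ Finset.range N, γ ^ t *
          (∑ k ∈ Finset.range t, ∑ sa : S × A, occ π Phat d₀ k sa * C sa.1 sa.2)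
        ≤ ∑ k ∈ Finset.range N, γ ^ (k + 1) / (1 - γ) *
          ∑ sa : S × A, occ π Phat d₀ k sa * C sa.1 sa.2 := by linarith
      _ = ∑ k ∈ Finset.range N, γ / (1 - γ) *
          (γ ^ k * ∑ sa : S × A, occ π Phat d₀ k sa * C sa.1 sa.2) := by
          refine Finset.sum_congr rfl fun k _ => ?_
          rw [pow_succ]
          ring
      _ = γ / (1 - γ) * ∑ k ∈ Finset.range N,
          γ ^ k * ∑ sa : S × A, occ π Phat d₀ k sa * C sa.1 sa.2 := by
          rw [Finset.mul_sum]
      _ ≤ γ / (1 - γ) * ∑' t : ℕ, γ ^ t *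
          ∑ sa : S × A, occ π Phat d₀ t sa * C sa.1 sa.2 := by
          refine mul_le_mul_of_nonneg_left ?_ (div_nonneg hγ0 h1γ.le)
          exact Summable.sum_le_tsum (Finset.range N)
            (fun k _ => mul_nonneg (pow_nonneg hγ0 k) (hc0 k)) hsc
  -- main tsum inequality
  have hmain : ∑' t : ℕ, γ ^ t *
      ((∑ sa : S × A, occ π Phat d₀ t sa * r sa.1 sa.2)
        - ∑ sa : S × A, occ π Pstar d₀ t sa * r sa.1 sa.2)
      ≤ Rmax * (γ / (1 - γ) * ∑' t : ℕ, γ ^ t *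
          ∑ sa : S × A, occ π Phat d₀ t sa * C sa.1 sa.2) := by
    have hsum1 : Summable (fun t : ℕ => γ ^ t *
        ((∑ sa : S × A, occ π Phat d₀ t sa * r sa.1 sa.2)
          - ∑ sa : S × A, occ π Pstar d₀ t sa * r sa.1 sa.2)) :=
      (hsρh.sub hsρs).congr fun t => by ring
    have hsum2 : Summable (fun t : ℕ => γ ^ t * (Rmax *
        ∑ k ∈ Finset.range t, ∑ sa : S × A, occ π Phat d₀ k sa * C sa.1 sa.2)) :=
      (hsE.mul_left Rmax).congr fun t => by ring
    calc ∑' t : ℕ, γ ^ t *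
          ((∑ sa : S × A, occ π Phat d₀ t sa * r sa.1 sa.2)
            - ∑ sa : S × A, occ π Pstar d₀ t sa * r sa.1 sa.2)
        ≤ ∑' t : ℕ, γ ^ t * (Rmax *
            ∑ k ∈ Finset.range t, ∑ sa : S × A, occ π Phat d₀ k sa * C sa.1 sa.2) :=
          Summable.tsum_le_tsum (fun t =>
            mul_le_mul_of_nonneg_left (hgap t) (pow_nonneg hγ0 t)) hsum1 hsum2
      _ = Rmax * ∑' t : ℕ, γ ^ t *
            ∑ k ∈ Finset.range t, ∑ sa : S × A, occ π Phat d₀ k sa * C sa.1 sa.2 := by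
          rw [← tsum_mul_left]
          exact tsum_congr fun t => by ring
      _ ≤ Rmax * (γ / (1 - γ) * ∑' t : ℕ, γ ^ t *
            ∑ sa : S × A, occ π Phat d₀ t sa * C sa.1 sa.2) :=
          mul_le_mul_of_nonneg_left h3 hRmax
  -- rewrite both sides
  have hEh := expReturn_eq18 (P := Phat) hπ hPhat hd₀ hr0 hr1 hγ0 hγ1
  have hEs := expReturn_eq18 (P := Pstar) hπ hPstar hd₀ hr0 hr1 hγ0 hγ1
  have hvisit : ∑ sa : S × A, visit π Phat d₀ γ sa * C sa.1 sa.2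
      = (1 - γ) * ∑' t : ℕ, γ ^ t * ∑ sa : S × A, occ π Phat d₀ t sa * C sa.1 sa.2 := by
    unfold visit
    calc ∑ sa : S × A, ((1 - γ) * ∑' t : ℕ, γ ^ t * occ π Phat d₀ t sa) * C sa.1 sa.2
        = ∑ sa : S × A, (1 - γ) * ∑' t : ℕ, γ ^ t * occ π Phat d₀ t sa * C sa.1 sa.2 := by
          refine Finset.sum_congr rfl fun sa _ => ?_
          rw [mul_assoc, ← tsum_mul_right]
      _ = (1 - γ) * ∑ sa : S × A, ∑' t : ℕ, γ ^ t * occ π Phat d₀ t sa * C sa.1 sa.2 := by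
          rw [Finset.mul_sum]
      _ = (1 - γ) * ∑' t : ℕ, ∑ sa : S × A, γ ^ t * occ π Phat d₀ t sa * C sa.1 sa.2 := by
          congr 1
          refine (Summable.tsum_finsetSum fun sa _ => ?_).symm
          apply summable_geom_bound18 (B := |C sa.1 sa.2|) hγ0 hγ1
          intro t
          have h01 : 0 ≤ occ π Phat d₀ t sa := (hμhP t).1 sa
          have hle1 : occ π Phat d₀ t sa ≤ 1 := by
            have := Finset.single_le_sum (f := occ π Phat d₀ t) (fun x _ => (hμhP t).1 x)
              (Finset.mem_univ sa)
            rw [(hμhP t).2] at this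
            exact this
          rw [abs_mul, abs_mul, abs_of_nonneg (pow_nonneg hγ0 t), abs_of_nonneg h01]
          calc γ ^ t * occ π Phat d₀ t sa * |C sa.1 sa.2|
              ≤ γ ^ t * 1 * |C sa.1 sa.2| := by
                refine mul_le_mul_of_nonneg_right ?_ (abs_nonneg _)
                exact mul_le_mul_of_nonneg_left hle1 (pow_nonneg hγ0 t)
            _ = |C sa.1 sa.2| * γ ^ t := by ring
      _ = (1 - γ) * ∑' t : ℕ, γ ^ t * ∑ sa : S × A, occ π Phat d₀ t sa * C sa.1 sa.2 := by
          congr 1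
          refine tsum_congr fun t => ?_
          rw [Finset.mul_sum]
          exact Finset.sum_congr rfl fun sa _ => by ring
  rw [hEh, hEs, hvisit]
  have hsplit : (∑' t : ℕ, γ ^ t * ∑ sa : S × A, occ π Phat d₀ t sa * r sa.1 sa.2)
      - (∑' t : ℕ, γ ^ t * ∑ sa : S × A, occ π Pstar d₀ t sa * r sa.1 sa.2)
      = ∑' t : ℕ, γ ^ t * ((∑ sa : S × A, occ π Phat d₀ t sa * r sa.1 sa.2)
        - ∑ sa : S × A, occ π Pstar d₀ t sa * r sa.1 sa.2) := by
    rw [← Summable.tsum_sub hsρh hsρs]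
    exact tsum_congr fun t => by ring
  rw [hsplit]
  have hrhs : γ * Rmax / (1 - γ) ^ 2 *
      ((1 - γ) * ∑' t : ℕ, γ ^ t * ∑ sa : S × A, occ π Phat d₀ t sa * C sa.1 sa.2)
      = Rmax * (γ / (1 - γ) * ∑' t : ℕ, γ ^ t *
          ∑ sa : S × A, occ π Phat d₀ t sa * C sa.1 sa.2) := by
    field_simp
  rw [hrhs]
  exact hmain
end
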